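/- arXiv:dg-ga/9702009 — 10 statements merged into one kernel-verified Lean document; each statement's English description precedes it below -/
import Mathlib

section
/- For all pairwise orthogonal unit vectors x, y, z in E one has 3(n−1)(T(z,x,x) + T(z,y,y)) − 2τ(z) = 0. -/
open RealInnerProductSpace

/-- For a trilinear form `T` (modelling `∇Ric` on a locally conformal flat
C-space) symmetric in its last two arguments, vanishing on the diagonal, and
satisfying the Codazzi-type identity, every triple of pairwise orthogonal unit
vectors `x, y, z` satisfies `3(n-1)(T(z,x,x) + T(z,y,y)) - 2 τ(z) = 0`. -/
theorem codazzi_trace_identity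
    {E : Type*} [NormedAddCommGroup E] [InnerProductSpace ℝ E]
    (n : ℕ) (hn : 3 ≤ n) (hdim : Module.finrank ℝ E = n)
    (T : E →ₗ[ℝ] E →ₗ[ℝ] E →ₗ[ℝ] ℝ)
    (hTsymm : ∀ x y z : E, T x y z = T x z y)
    (b : OrthonormalBasis (Fin n) ℝ E)
    (τ : E → ℝ) (hτ : ∀ x : E, τ x = ∑ i, T x (b i) (b i))
    (hdiag : ∀ x : E, T x x x = 0)
    (hcodazzi : ∀ x y z : E, T x y z - T y x z =
      (1 / (2 * ((n : ℝ) - 1))) * (τ x * ⟪y, z⟫ - τ y * ⟪x, z⟫)) :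
    ∀ x y z : E, ‖x‖ = 1 → ‖y‖ = 1 → ‖z‖ = 1 →
      ⟪x, y⟫ = 0 → ⟪x, z⟫ = 0 → ⟪y, z⟫ = 0 →
      3 * ((n : ℝ) - 1) * (T z x x + T z y y) - 2 * τ z = 0 := by
  have hne : (2 : ℝ) * ((n : ℝ) - 1) ≠ 0 := by
    have : (3 : ℝ) ≤ (n : ℝ) := by exact_mod_cast hn
    nlinarith
  have key : ∀ x y : E, ‖x‖ = 1 → ⟪x, y⟫ = 0 →
      3 * ((n : ℝ) - 1) * T y x x = τ y := by
    intro x y hx hxy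
    have h1 := hdiag (x + y)
    have h2 := hdiag (x - y)
    simp only [map_add, map_sub, LinearMap.add_apply, LinearMap.sub_apply,
      hdiag] at h1 h2
    -- polarization: 2 * T x x y + T y x x = 0 (using symmetry in last two args)
    have hpol : 2 * T x y x + T y x x = 0 := by
      have hs1 := hTsymm x x y
      have hs2 := hTsymm y x y
      have hs3 := hTsymm x y y
      linarith
    have hc := hcodazzi x y x
    have hyx : ⟪y, x⟫ = (0 : ℝ) := by rw [real_inner_comm]; exact hxy
    have hxx : ⟪x, x⟫ = (1 : ℝ) := by
      rw [real_inner_self_eq_norm_sq, hx]; norm_num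
    rw [hyx, hxx] at hc
    have hne' : (n:ℝ) - 1 ≠ 0 := by intro h; apply hne; rw [h]; ring
    field_simp at hc
    linear_combination -hc + ((n:ℝ) - 1) * hpol
  intro x y z hx hy hz hxy hxz hyz
  have h1 := key x z hx hxz
  have h2 := key y z hy hyz
  linarith
end

section
/- Under these hypotheses, T(x,y,y) = 0 for all x, y in E. (This is the algebraic core of the theorem that every connected locally conformal flat C-space of dimension at least 3 has constant Ricci eigenvalues.) -/
open RealInnerProductSpace

/-- Algebraic core of: every connected locally conformal flat C-space of
dimension `≥ 3` has constant Ricci eigenvalues. A trilinear form `T`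
(modelling `∇Ric`) symmetric in its last two arguments, vanishing on the
diagonal, and satisfying the Codazzi-type identity must satisfy
`T(x,y,y) = 0` for all `x, y`. -/
theorem nabla_ric_vanishes
    {E : Type*} [NormedAddCommGroup E] [InnerProductSpace ℝ E]
    (n : ℕ) (hn : 3 ≤ n) (hdim : Module.finrank ℝ E = n)
    (T : E →ₗ[ℝ] E →ₗ[ℝ] E →ₗ[ℝ] ℝ)
    (hTsymm : ∀ x y z : E, T x y z = T x z y)
    (b : OrthonormalBasis (Fin n) ℝ E)
    (τ : E → ℝ) (hτ : ∀ x : E, τ x = ∑ i, T x (b i) (b i))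
    (hdiag : ∀ x : E, T x x x = 0)
    (hcodazzi : ∀ x y z : E, T x y z - T y x z =
      (1 / (2 * ((n : ℝ) - 1))) * (τ x * ⟪y, z⟫ - τ y * ⟪x, z⟫)) :
    ∀ x y : E, T x y y = 0 := by
  set c : ℝ := 1 / (2 * ((n : ℝ) - 1)) with hc
  -- Step 1: polarization of the diagonal condition
  have hTc : ∀ x y : E, T x y y + 2 * T y x y = 0 := by
    intro x y
    have h1 := hdiag (x + y)
    have h2 := hdiag (x - y)
    simp only [map_add, map_sub, LinearMap.add_apply, LinearMap.sub_apply] at h1 h2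
    have hs1 := hTsymm x y x
    have hs2 := hTsymm y x y
    have hd1 := hdiag x
    have hd2 := hdiag y
    linarith
  -- Step 2: key identity
  have hkey : ∀ x y : E, 3 * T x y y = 2 * (c * (τ x * ⟪y, y⟫ - τ y * ⟪x, y⟫)) := by
    intro x y
    have h := hcodazzi x y y
    have h2 := hTc x y
    linarith
  -- inner products of basis vectors
  have hbb : ∀ i : Fin n, ⟪b i, b i⟫ = (1 : ℝ) := by
    intro i
    have := b.orthonormal.1 i
    rw [real_inner_self_eq_norm_sq, this, one_pow]
  -- Step 3: trace identity for τ
  have hτlin : ∀ x : E, ∑ i, τ (b i) * ⟪x, b i⟫ = τ x := by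
    intro x
    have hxr : ∑ i, ⟪b i, x⟫ • b i = x := b.sum_repr' x
    calc ∑ i, τ (b i) * ⟪x, b i⟫
        = ∑ i, ∑ j, ⟪x, b i⟫ * T (b i) (b j) (b j) := by
          refine Finset.sum_congr rfl fun i _ => ?_
          rw [hτ (b i), Finset.sum_mul]
          exact Finset.sum_congr rfl fun j _ => mul_comm _ _
      _ = ∑ j, ∑ i, ⟪x, b i⟫ * T (b i) (b j) (b j) := Finset.sum_comm
      _ = ∑ j, T (∑ i, ⟪x, b i⟫ • b i) (b j) (b j) := by
          refine Finset.sum_congr rfl fun j _ => ?_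
          rw [map_sum]
          simp [LinearMap.smul_apply]
      _ = τ x := by
          have hcomm : (∑ i, ⟪x, b i⟫ • b i) = ∑ i, ⟪b i, x⟫ • b i :=
            Finset.sum_congr rfl fun i _ => by rw [real_inner_comm]
          have : (∑ i, ⟪x, b i⟫ • b i) = x := hcomm.trans hxr
          rw [this, hτ]
  -- Step 4: τ vanishes
  have hτ0 : ∀ x : E, τ x = 0 := by
    intro x
    have hsum : 3 * τ x = 2 * (c * ((n : ℝ) * τ x - τ x)) := by
      have := hτ x
      calc 3 * τ x = ∑ i, 3 * T x (b i) (b i) := by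
            rw [← Finset.mul_sum, ← hτ x]
        _ = ∑ i, 2 * (c * (τ x * ⟪b i, b i⟫ - τ (b i) * ⟪x, b i⟫)) :=
            Finset.sum_congr rfl fun i _ => hkey x (b i)
        _ = ∑ i, (2 * c * τ x * ⟪b i, b i⟫ - 2 * c * (τ (b i) * ⟪x, b i⟫)) :=
            Finset.sum_congr rfl fun i _ => by ring
        _ = 2 * (c * ((n : ℝ) * τ x - τ x)) := by
            rw [Finset.sum_sub_distrib]
            simp only [hbb, mul_one, ← Finset.mul_sum, hτlin x,
              Finset.sum_const, Finset.card_fin, nsmul_eq_mul]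
            ring
    have hn1 : ((n : ℝ) - 1) ≠ 0 := by
      have : (3 : ℝ) ≤ (n : ℝ) := by exact_mod_cast hn
      linarith
    have hcn : c * ((n : ℝ) - 1) = 1 / 2 := by
      rw [hc]; field_simp; try ring
    nlinarith [hsum, hcn]
  intro x y
  have := hkey x y
  rw [hτ0 x, hτ0 y] at this
  simp only [zero_mul, sub_self, mul_zero] at this
  linarith
end

section
/- Suppose that for each k ∈ {1,…,l} one has Σ_{j≠k} m_j·((n−1)(r_k + r_j) − s)/((n−1)(n−2)(r_k − r_j)) = 0. Then the u_k are pairwise distinct and for each k: n − m_k = 2·u_k·Σ_{j≠k} m_j/(u_k − u_j). -/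
open Finset

/-- If the distinct constant Ricci eigenvalues `r_k` (with multiplicities `m_k`
summing to `n`) of a locally conformal flat manifold satisfy the curvature sum
relations `Σ_{j≠k} m_j ((n-1)(r_k+r_j) - s)/((n-1)(n-2)(r_k-r_j)) = 0`, then
the shifted eigenvalues `u_k = 2 r_k - s/(n-1)` are pairwise distinct and
satisfy `n - m_k = 2 u_k Σ_{j≠k} m_j/(u_k - u_j)` for every `k`. -/
theorem star_system_of_curvature_relations
    (n l : ℕ) (hn : 3 ≤ n) (hl : 2 ≤ l)
    (r : Fin l → ℝ) (hr : Function.Injective r)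
    (m : Fin l → ℕ) (hm : ∀ k, 0 < m k) (hsum : ∑ k, m k = n)
    (s : ℝ) (hs : s = ∑ k, (m k : ℝ) * r k)
    (u : Fin l → ℝ) (hu : ∀ k, u k = 2 * r k - s / ((n : ℝ) - 1))
    (hrel : ∀ k, ∑ j ∈ univ.erase k,
      (m j : ℝ) * (((n : ℝ) - 1) * (r k + r j) - s) /
        (((n : ℝ) - 1) * ((n : ℝ) - 2) * (r k - r j)) = 0) :
    Function.Injective u ∧
      ∀ k, (n : ℝ) - (m k : ℝ) =
        2 * u k * ∑ j ∈ univ.erase k, (m j : ℝ) / (u k - u j) := by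
  have hn3 : (3 : ℝ) ≤ (n : ℝ) := by exact_mod_cast hn
  have hn1 : (n : ℝ) - 1 ≠ 0 := by linarith
  have hn2 : (n : ℝ) - 2 ≠ 0 := by linarith
  have hinj : Function.Injective u := by
    intro a b h
    rw [hu a, hu b] at h
    exact hr (by linarith)
  refine ⟨hinj, fun k => ?_⟩
  have hsumE : ∑ j ∈ univ.erase k, (m j : ℝ) = (n : ℝ) - m k := by
    have h1 : (m k : ℝ) + ∑ j ∈ univ.erase k, (m j : ℝ) = ∑ j, (m j : ℝ) :=
      Finset.add_sum_erase univ (fun j => (m j : ℝ)) (mem_univ k)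
    have h2 : (∑ j, (m j : ℝ)) = (n : ℝ) := by exact_mod_cast hsum
    linarith
  have hd : ∀ j ∈ univ.erase k, r k - r j ≠ 0 := by
    intro j hj h
    exact (mem_erase.mp hj).1 (hr (by linarith)).symm
  have key : u k * ∑ j ∈ univ.erase k, (m j : ℝ) / (r k - r j) = (n : ℝ) - m k := by
    have h0 := hrel k
    have heq : ∀ j ∈ univ.erase k,
        (m j : ℝ) * (((n : ℝ) - 1) * (r k + r j) - s) /
          (((n : ℝ) - 1) * ((n : ℝ) - 2) * (r k - r j))
        = (u k * ((m j : ℝ) / (r k - r j)) - m j) / ((n : ℝ) - 2) := by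
      intro j hj
      have hdj := hd j hj
      rw [hu k]
      field_simp
      ring
    rw [Finset.sum_congr rfl heq, ← Finset.sum_div] at h0
    have h1 : ∑ j ∈ univ.erase k, (u k * ((m j : ℝ) / (r k - r j)) - m j) = 0 :=
      (div_eq_zero_iff.mp h0).resolve_right hn2
    rw [Finset.sum_sub_distrib, ← Finset.mul_sum, hsumE] at h1
    linarith
  have hS : ∑ j ∈ univ.erase k, (m j : ℝ) / (u k - u j) =
      (∑ j ∈ univ.erase k, (m j : ℝ) / (r k - r j)) / 2 := by
    rw [Finset.sum_div]
    refine Finset.sum_congr rfl fun j hj => ?_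
    have : u k - u j = 2 * (r k - r j) := by rw [hu k, hu j]; ring
    rw [this, mul_comm, ← div_div]
  rw [hS]
  linear_combination -key
end

section
/- If the system (★) holds and l ≥ 2, then u_k ≠ 0 for every k ∈ {1,…,l}. -/
open Finset

/-- If the system (★) `n - m_k = 2 u_k Σ_{j≠k} m_j/(u_k - u_j)` holds for
pairwise distinct reals `u_1, …, u_l` with positive multiplicities `m_k`
summing to `n`, and `l ≥ 2`, then every `u_k` is nonzero. -/
theorem star_system_u_ne_zero
    (n l : ℕ) (hn : 0 < n) (hl : 2 ≤ l)
    (m : Fin l → ℕ) (hm : ∀ k, 0 < m k) (hsum : ∑ k, m k = n)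
    (u : Fin l → ℝ) (hu : Function.Injective u)
    (hstar : ∀ k, (n : ℝ) - (m k : ℝ) =
      2 * u k * ∑ j ∈ univ.erase k, (m j : ℝ) / (u k - u j)) :
    ∀ k, u k ≠ 0 := by
  intro k hk
  have h := hstar k
  rw [hk] at h
  simp at h
  -- h : (n : ℝ) = m k  (after simp)
  have hnm : n = m k := by
    have : (n : ℝ) = m k := by linarith
    exact_mod_cast this
  -- find another index
  obtain ⟨j, hj⟩ : ∃ j : Fin l, j ≠ k := by
    by_contra hc
    push_neg at hc
    have h01 : (⟨0, by omega⟩ : Fin l) = k := hc _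
    have h11 : (⟨1, by omega⟩ : Fin l) = k := hc _
    rw [← h11] at h01
    exact absurd (congrArg Fin.val h01) (by simp)
  have : m k + m j ≤ ∑ i, m i := by
    have hsub : ({k, j} : Finset (Fin l)) ⊆ univ := subset_univ _
    calc m k + m j = ∑ i ∈ ({k, j} : Finset (Fin l)), m i := by
          rw [Finset.sum_pair (Ne.symm hj)]
      _ ≤ ∑ i, m i := Finset.sum_le_sum_of_subset hsub
  have := hm j
  omega
end

section
/- If the system (★) holds and l ≥ 2 (so that all u_k are nonzero), then Σ_{k=1}^{l} (n − m_k)·m_k·u_k = 0 and Σ_{k=1}^{l} (n − m_k)·m_k/u_k = 0. -/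
/-!
Write `N_k = ∑_{j ≠ k} m_j = n - m_k`. Multiplying (★) by `m_k / u_k` turns `∑ N_k m_k / u_k`
into `2 ∑_{j ≠ k} m_k m_j / (u_k - u_j)`, the sum of an antisymmetric kernel over ordered pairs,
hence zero. Multiplying by `m_k u_k` instead produces the kernel
`u_k² / (u_k - u_j) = u_k + u_k u_j / (u_k - u_j)`: its antisymmetric part vanishes again and the
rest is `2 ∑ N_k m_k u_k`, so `S = 2 S` for the first sum `S`.
-/

open Finset

theorem Finset.sum_sum_erase_eq_zero_of_antisymm {ι M : Type*} [Fintype ι] [DecidableEq ι]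
    [AddCommGroup M] {g : ι → ι → M} (hg : ∀ i j, g i j = -g j i) :
    ∑ i, ∑ j ∈ univ.erase i, g i j = 0 := by
  rw [sum_sigma']
  refine sum_involution (fun p _ => ⟨p.2, p.1⟩) (fun p _ => by simp [hg p.1 p.2])
    (fun p hp _ => ?_) (fun p hp => ?_) (fun p _ => rfl) <;>
  simp only [mem_sigma, mem_univ, mem_erase, true_and] at hp ⊢ <;> grind

section StarSystem

variable {ι K : Type*} [Fintype ι] [DecidableEq ι] [Field K]

theorem sum_sum_erase_mul_div_sub_eq_zero (a u : ι → K) :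
    ∑ k, ∑ j ∈ univ.erase k, a k * a j / (u k - u j) = 0 :=
  sum_sum_erase_eq_zero_of_antisymm fun k j => by rw [← neg_sub, div_neg, mul_comm]

theorem sum_sum_erase_mul_sq_div_sub {u : ι → K} (hu : Function.Injective u) (a : ι → K) :
    ∑ k, ∑ j ∈ univ.erase k, a k * a j * u k ^ 2 / (u k - u j) =
      ∑ k, ∑ j ∈ univ.erase k, a k * a j * u k := by
  have hsplit : ∀ k, ∀ j ∈ univ.erase k, a k * a j * u k ^ 2 / (u k - u j) =
      a k * a j * u k * u j / (u k - u j) + a k * a j * u k := fun k j hj => by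
    have : u k - u j ≠ 0 := sub_ne_zero.mpr (hu.ne (ne_of_mem_erase hj).symm)
    field_simp
    ring
  have hzero : ∑ k, ∑ j ∈ univ.erase k, a k * a j * u k * u j / (u k - u j) = 0 :=
    sum_sum_erase_eq_zero_of_antisymm fun k j => by rw [← neg_sub, div_neg]; ring_nf
  simp_rw [sum_congr rfl (fun k _ => sum_congr rfl (hsplit k)), sum_add_distrib, hzero, zero_add]

/-- The system (★), with `n - m_k` written as `∑_{j ≠ k} a j`. -/
def IsStarSystem (a u : ι → K) : Prop :=
  ∀ k, ∑ j ∈ univ.erase k, a j = 2 * u k * ∑ j ∈ univ.erase k, a j / (u k - u j)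

namespace IsStarSystem

variable {a u : ι → K}

theorem ne_zero (h : IsStarSystem a u) {k : ι} (hk : ∑ j ∈ univ.erase k, a j ≠ 0) : u k ≠ 0 :=
  fun h0 => hk (by rw [h k, h0, mul_zero, zero_mul])

theorem sum_mul_mul_eq_zero (h : IsStarSystem a u) (hu : Function.Injective u) :
    ∑ k, (∑ j ∈ univ.erase k, a j) * a k * u k = 0 := by
  set S := ∑ k, (∑ j ∈ univ.erase k, a j) * a k * u k
  have hS : S = 2 * S := calc
    S = 2 * ∑ k, ∑ j ∈ univ.erase k, a k * a j * u k ^ 2 / (u k - u j) := by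
      simp_rw [S, mul_sum]
      refine sum_congr rfl fun k _ => ?_
      rw [h k, mul_sum, sum_mul, sum_mul]
      exact sum_congr rfl fun j _ => by ring
    _ = 2 * S := by
      rw [sum_sum_erase_mul_sq_div_sub hu]
      simp_rw [S, sum_mul]
      exact congrArg _ (sum_congr rfl fun k _ => sum_congr rfl fun j _ => by ring)
  linear_combination -hS

theorem sum_mul_div_eq_zero (h : IsStarSystem a u) (hu : ∀ k, u k ≠ 0) :
    ∑ k, (∑ j ∈ univ.erase k, a j) * a k / u k = 0 := calc
  _ = 2 * ∑ k, ∑ j ∈ univ.erase k, a k * a j / (u k - u j) := by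
    rw [mul_sum]
    refine sum_congr rfl fun k _ => ?_
    rw [h k, mul_sum, sum_mul, sum_div, mul_sum]
    refine sum_congr rfl fun j _ => ?_
    field_simp [hu k]
  _ = 0 := by rw [sum_sum_erase_mul_div_sub_eq_zero, mul_zero]

end IsStarSystem

end StarSystem

theorem star_system_sum_relations_general
    (n l : ℕ) (hl : 2 ≤ l)
    (m : Fin l → ℕ) (hm : ∀ k, 0 < m k) (hsum : ∑ k, m k = n)
    (u : Fin l → ℝ) (hu : Function.Injective u)
    (hstar : ∀ k, (n : ℝ) - (m k : ℝ) =
      2 * u k * ∑ j ∈ univ.erase k, (m j : ℝ) / (u k - u j)) :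
    (∑ k, ((n : ℝ) - (m k : ℝ)) * (m k : ℝ) * u k = 0) ∧
    (∑ k, ((n : ℝ) - (m k : ℝ)) * (m k : ℝ) / u k = 0) := by
  have : Nontrivial (Fin l) := Fin.nontrivial_iff_two_le.mpr hl
  have hcompl : ∀ k, (n : ℝ) - m k = ∑ j ∈ univ.erase k, (m j : ℝ) := fun k => by
    rw [sum_erase_eq_sub (mem_univ k), ← hsum, Nat.cast_sum]
  have hsys : IsStarSystem (fun k => (m k : ℝ)) u := fun k => (hcompl k).symm.trans (hstar k)
  have hu0 : ∀ k, u k ≠ 0 := fun k => hsys.ne_zero <| ne_of_gt <|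
    sum_pos (fun j _ => Nat.cast_pos.mpr (hm j)) ((erase_nonempty (mem_univ k)).mpr univ_nontrivial)
  simp only [hcompl]
  exact ⟨hsys.sum_mul_mul_eq_zero hu, hsys.sum_mul_div_eq_zero hu0⟩

/-- If the system (★) `n - m_k = 2 u_k Σ_{j≠k} m_j/(u_k - u_j)` holds for
pairwise distinct reals `u_1, …, u_l` with positive multiplicities `m_k`
summing to `n`, and `l ≥ 2`, then `Σ_k (n - m_k) m_k u_k = 0` and
`Σ_k (n - m_k) m_k / u_k = 0`. -/
theorem star_system_sum_relations
    (n l : ℕ) (hn : 0 < n) (hl : 2 ≤ l)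
    (m : Fin l → ℕ) (hm : ∀ k, 0 < m k) (hsum : ∑ k, m k = n)
    (u : Fin l → ℝ) (hu : Function.Injective u)
    (hstar : ∀ k, (n : ℝ) - (m k : ℝ) =
      2 * u k * ∑ j ∈ univ.erase k, (m j : ℝ) / (u k - u j)) :
    (∑ k, ((n : ℝ) - (m k : ℝ)) * (m k : ℝ) * u k = 0) ∧
    (∑ k, ((n : ℝ) - (m k : ℝ)) * (m k : ℝ) / u k = 0) :=
  star_system_sum_relations_general n l hl m hm hsum u hu hstar
end

section
/- There do not exist a positive integer n, positive integers m_1, m_2, m_3 with m_1 + m_2 + m_3 = n, and nonzero real numbers u_1, u_2, u_3 such that Σ_{k=1}^{3} (n − m_k)·m_k·u_k = 0 and Σ_{k=1}^{3} (n − m_k)·m_k/u_k = 0. (Hence the Ricci tensor of a locally conformal flat Riemannian manifold with constant Ricci eigenvalues cannot have exactly three distinct eigenvalues.) -/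
/-- Auxiliary lemma: if `a, b, c > 0` with `c < a + b`, the `x, y, z` are
nonzero with `x * y > 0`, then the two sum identities cannot both hold. -/
lemma aux_no3 (a b c x y z : ℝ) (ha : 0 < a) (hb : 0 < b) (hc : 0 < c)
    (hcab : c < a + b) (hx : x ≠ 0) (hy : y ≠ 0) (hz : z ≠ 0)
    (hxy : 0 < x * y)
    (hsum : a * x + b * y + c * z = 0)
    (hinv : a / x + b / y + c / z = 0) : False := by
  have hinv' : a * (y * z) + b * (x * z) + c * (x * y) = 0 := by
    field_simp at hinv
    nlinarith [hinv]
  have h1 : c * z = -(a * x + b * y) := by linarith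
  have h2 : c * (x * y) = -(z * (a * y + b * x)) := by nlinarith [hinv']
  have key : c ^ 2 * (x * y) = (a * x + b * y) * (a * y + b * x) := by
    linear_combination c * h2 - (a * y + b * x) * h1
  have h3 : 0 < ((a + b) ^ 2 - c ^ 2) * (x * y) := by
    apply mul_pos _ hxy
    nlinarith
  nlinarith [key, h3, mul_nonneg (mul_pos ha hb).le (sq_nonneg (x - y))]

/-- There do not exist a positive integer `n`, positive integers
`m_1, m_2, m_3` with `m_1 + m_2 + m_3 = n`, and nonzero reals `u_1, u_2, u_3`
such that `Σ_k (n - m_k) m_k u_k = 0` and `Σ_k (n - m_k) m_k / u_k = 0`.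
Hence the Ricci tensor of a locally conformal flat Riemannian manifold with
constant Ricci eigenvalues cannot have exactly three distinct eigenvalues. -/
theorem no_three_eigenvalues :
    ¬ ∃ (n m1 m2 m3 : ℕ) (u1 u2 u3 : ℝ),
      0 < n ∧ 0 < m1 ∧ 0 < m2 ∧ 0 < m3 ∧ m1 + m2 + m3 = n ∧
      u1 ≠ 0 ∧ u2 ≠ 0 ∧ u3 ≠ 0 ∧
      ((n : ℝ) - m1) * m1 * u1 + ((n : ℝ) - m2) * m2 * u2
        + ((n : ℝ) - m3) * m3 * u3 = 0 ∧
      ((n : ℝ) - m1) * m1 / u1 + ((n : ℝ) - m2) * m2 / u2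
        + ((n : ℝ) - m3) * m3 / u3 = 0 := by
  rintro ⟨n, m1, m2, m3, u1, u2, u3, hn, hm1, hm2, hm3, hsum, hu1, hu2, hu3,
    heq1, heq2⟩
  -- real versions of the multiplicities
  have hM1 : (0 : ℝ) < m1 := by exact_mod_cast hm1
  have hM2 : (0 : ℝ) < m2 := by exact_mod_cast hm2
  have hM3 : (0 : ℝ) < m3 := by exact_mod_cast hm3
  have hN : (n : ℝ) = (m1 : ℝ) + m2 + m3 := by
    exact_mod_cast (congrArg (fun k : ℕ => (k : ℝ)) hsum).symm
  set a1 : ℝ := ((n : ℝ) - m1) * m1 with ha1def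
  set a2 : ℝ := ((n : ℝ) - m2) * m2 with ha2def
  set a3 : ℝ := ((n : ℝ) - m3) * m3 with ha3def
  have hA1 : 0 < a1 := by rw [ha1def, hN]; nlinarith
  have hA2 : 0 < a2 := by rw [ha2def, hN]; nlinarith
  have hA3 : 0 < a3 := by rw [ha3def, hN]; nlinarith
  have hlt3 : a3 < a1 + a2 := by rw [ha1def, ha2def, ha3def, hN]; nlinarith
  have hlt2 : a2 < a1 + a3 := by rw [ha1def, ha2def, ha3def, hN]; nlinarith
  have hlt1 : a1 < a2 + a3 := by rw [ha1def, ha2def, ha3def, hN]; nlinarith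
  -- at least one of the pairwise products is positive
  rcases lt_or_gt_of_ne (mul_ne_zero hu1 hu2) with h12 | h12
  · rcases lt_or_gt_of_ne (mul_ne_zero hu1 hu3) with h13 | h13
    · -- both negative, so u2 * u3 > 0
      have hp : 0 < u1 ^ 2 * (u2 * u3) := by
        have h := mul_pos_of_neg_of_neg h12 h13
        have he : u1 * u2 * (u1 * u3) = u1 ^ 2 * (u2 * u3) := by ring
        linarith [he ▸ h]
      have h23 : 0 < u2 * u3 := by
        by_contra hcon
        push_neg at hcon
        have := mul_nonpos_of_nonneg_of_nonpos (sq_nonneg u1) hcon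
        linarith
      exact aux_no3 a2 a3 a1 u2 u3 u1 hA2 hA3 hA1 hlt1 hu2 hu3 hu1 h23
        (by linarith) (by linarith)
    · exact aux_no3 a1 a3 a2 u1 u3 u2 hA1 hA3 hA2 hlt2 hu1 hu3 hu2 h13
        (by linarith) (by linarith)
  · exact aux_no3 a1 a2 a3 u1 u2 u3 hA1 hA2 hA3 hlt3 hu1 hu2 hu3 h12
      heq1 heq2
end

section
/- If the system (★) holds and l ≥ 2, then Σ_{k=1}^{l} (n − 2m_k)·m_k·u_k² = −(Σ_{k=1}^{l} m_k·u_k)². -/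
open Finset

/-- If the system (★) `n - m_k = 2 u_k Σ_{j≠k} m_j/(u_k - u_j)` holds for
pairwise distinct reals `u_1, …, u_l` with positive multiplicities `m_k`
summing to `n`, and `l ≥ 2`, then
`Σ_k (n - 2 m_k) m_k u_k² = -(Σ_k m_k u_k)²`. -/
theorem star_system_quadratic_relation
    (n l : ℕ) (hn : 0 < n) (hl : 2 ≤ l)
    (m : Fin l → ℕ) (hm : ∀ k, 0 < m k) (hsum : ∑ k, m k = n)
    (u : Fin l → ℝ) (hu : Function.Injective u)
    (hstar : ∀ k, (n : ℝ) - (m k : ℝ) =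
      2 * u k * ∑ j ∈ univ.erase k, (m j : ℝ) / (u k - u j)) :
    ∑ k, ((n : ℝ) - 2 * (m k : ℝ)) * (m k : ℝ) * (u k) ^ 2 =
      -(∑ k, (m k : ℝ) * u k) ^ 2 := by
  have hne : ∀ {k j : Fin l}, j ≠ k → u k - u j ≠ 0 := by
    intro k j h
    exact sub_ne_zero_of_ne fun e => h (hu e).symm
  set M : Fin l → ℝ := fun k => (m k : ℝ) with hMdef
  have hA : ∑ k, M k = (n : ℝ) := by
    rw [hMdef, ← Nat.cast_sum, hsum]
  set B := ∑ k, M k * u k with hB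
  set C := ∑ k, M k * u k ^ 2 with hC
  set D := ∑ k, M k ^ 2 * u k ^ 2 with hD
  set F : Fin l → Fin l → ℝ := fun k j => 2 * M k * M j * u k ^ 3 / (u k - u j) with hF
  -- multiply (★)_k by M k * u k ^ 2 and sum
  have key : (n : ℝ) * C - D = ∑ k, ∑ j ∈ univ.erase k, F k j := by
    calc (n:ℝ) * C - D = ∑ k, M k * u k ^ 2 * ((n:ℝ) - M k) := by
          rw [hC, hD, Finset.mul_sum, ← Finset.sum_sub_distrib]
          exact Finset.sum_congr rfl fun k _ => by ring
      _ = ∑ k, ∑ j ∈ univ.erase k, F k j := by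
          refine Finset.sum_congr rfl fun k _ => ?_
          rw [hstar k]
          simp only [Finset.mul_sum]
          refine Finset.sum_congr rfl fun j hj => ?_
          have h1 : u k - u j ≠ 0 := hne (Finset.ne_of_mem_erase hj)
          rw [hF]
          field_simp
          ring
  have hswap : (∑ k, ∑ j ∈ univ.erase k, F k j) = ∑ k, ∑ j ∈ univ.erase k, F j k := by
    refine Finset.sum_comm' ?_
    intro x y
    simp only [Finset.mem_univ, Finset.mem_erase, true_and, and_true]
    exact ne_comm
  have h2S : 2 * ((n:ℝ) * C - D) = ∑ k, ∑ j ∈ univ.erase k, (F k j + F j k) := by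
    rw [key, two_mul]
    nth_rewrite 2 [hswap]
    rw [← Finset.sum_add_distrib]
    exact Finset.sum_congr rfl fun k _ => (Finset.sum_add_distrib).symm
  have hsym : ∀ k : Fin l, ∀ j ∈ univ.erase k,
      F k j + F j k = 2 * M k * M j * (u k ^ 2 + u k * u j + u j ^ 2) := by
    intro k j hj
    have h1 : u k - u j ≠ 0 := hne (Finset.ne_of_mem_erase hj)
    have h2 : u j - u k ≠ 0 := hne (Finset.ne_of_mem_erase hj).symm
    rw [hF]
    field_simp
    ring
  have hinner : ∀ k : Fin l, ∑ j, 2 * M k * M j * (u k ^ 2 + u k * u j + u j ^ 2)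
      = 2 * M k * ((n:ℝ) * u k ^ 2 + B * u k + C) := by
    intro k
    have e1 : ∑ j, 2 * M k * M j * (u k ^ 2 + u k * u j + u j ^ 2)
        = 2 * M k * u k ^ 2 * (∑ j, M j) + 2 * M k * u k * (∑ j, M j * u j)
          + 2 * M k * (∑ j, M j * u j ^ 2) := by
      rw [Finset.mul_sum, Finset.mul_sum, Finset.mul_sum, ← Finset.sum_add_distrib,
        ← Finset.sum_add_distrib]
      exact Finset.sum_congr rfl fun j _ => by ring
    rw [e1, hA, ← hB, ← hC]
    ring
  have heval : ∑ k, ∑ j ∈ univ.erase k, (F k j + F j k)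
      = 4 * ((n:ℝ) * C) + 2 * B ^ 2 - 6 * D := by
    calc ∑ k, ∑ j ∈ univ.erase k, (F k j + F j k)
        = ∑ k, ∑ j ∈ univ.erase k, 2 * M k * M j * (u k ^ 2 + u k * u j + u j ^ 2) := by
          exact Finset.sum_congr rfl fun k _ => Finset.sum_congr rfl (hsym k)
      _ = ∑ k, ((∑ j, 2 * M k * M j * (u k ^ 2 + u k * u j + u j ^ 2))
            - 2 * M k * M k * (u k ^ 2 + u k * u k + u k ^ 2)) := by
          exact Finset.sum_congr rfl fun k _ =>
            Finset.sum_erase_eq_sub (Finset.mem_univ k)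
      _ = ∑ k, (2 * M k * ((n:ℝ) * u k ^ 2 + B * u k + C)
            - 2 * M k * M k * (u k ^ 2 + u k * u k + u k ^ 2)) := by
          exact Finset.sum_congr rfl fun k _ => by rw [hinner k]
      _ = 2 * (n:ℝ) * C + 2 * B * B + 2 * (n:ℝ) * C - 6 * D := by
          have e2 : ∀ k : Fin l, 2 * M k * ((n:ℝ) * u k ^ 2 + B * u k + C)
              - 2 * M k * M k * (u k ^ 2 + u k * u k + u k ^ 2)
              = 2 * (n:ℝ) * (M k * u k ^ 2) + 2 * B * (M k * u k) + 2 * C * M k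
                - 6 * (M k ^ 2 * u k ^ 2) := fun k => by ring
          rw [Finset.sum_congr rfl fun k _ => e2 k]
          rw [Finset.sum_sub_distrib, Finset.sum_add_distrib, Finset.sum_add_distrib,
            ← Finset.mul_sum, ← Finset.mul_sum, ← Finset.mul_sum, ← Finset.mul_sum,
            ← hB, ← hC, ← hD, hA]
          ring
      _ = 4 * ((n:ℝ) * C) + 2 * B ^ 2 - 6 * D := by ring
  have hmain : (n:ℝ) * C + B ^ 2 - 2 * D = 0 := by
    have := h2S.trans heval
    linarith
  have hT : ∑ k, ((n : ℝ) - 2 * M k) * M k * u k ^ 2 = (n:ℝ) * C - 2 * D := by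
    rw [hC, hD, Finset.mul_sum, Finset.mul_sum, ← Finset.sum_sub_distrib]
    exact Finset.sum_congr rfl fun k _ => by ring
  rw [hT]
  linarith
end

section
/- If the system (★) holds and l ≥ 3, then there exists exactly one index s ∈ {1,…,l} such that m_s > n/2. -/
open Finset

/-- If the system (★) `n - m_k = 2 u_k Σ_{j≠k} m_j/(u_k - u_j)` holds for
pairwise distinct reals `u_1, …, u_l` with positive multiplicities `m_k`
summing to `n`, and `l ≥ 3`, then there is exactly one index `s` with
`m_s > n/2`. -/
theorem star_system_unique_large_multiplicity
    (n l : ℕ) (hn : 0 < n) (hl : 3 ≤ l)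
    (m : Fin l → ℕ) (hm : ∀ k, 0 < m k) (hsum : ∑ k, m k = n)
    (u : Fin l → ℝ) (hu : Function.Injective u)
    (hstar : ∀ k, (n : ℝ) - (m k : ℝ) =
      2 * u k * ∑ j ∈ univ.erase k, (m j : ℝ) / (u k - u j)) :
    ∃! s : Fin l, (n : ℝ) / 2 < (m s : ℝ) := by
  have hl0 : 0 < l := by omega
  have hnt : Nontrivial (Fin l) := Fin.nontrivial_iff_two_le.mpr (by omega)
  -- every multiplicity is < n
  have hmn : ∀ k : Fin l, m k < n := by
    intro k
    obtain ⟨j, hj⟩ := exists_ne k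
    have := Finset.single_lt_sum hj (mem_univ k) (mem_univ j) (hm j)
      (fun i _ _ => Nat.zero_le _)
    omega
  have hmnR : ∀ k : Fin l, (m k : ℝ) < n := by
    intro k; exact_mod_cast hmn k
  have hmR : ∀ k : Fin l, (0:ℝ) < m k := by
    intro k; exact_mod_cast hm k
  -- all u k are nonzero
  have hu0 : ∀ k, u k ≠ 0 := by
    intro k hk
    have h := hstar k
    rw [hk] at h
    simp at h
    linarith [hmnR k, h]
  -- sign lemma: the eigenvalue at which u is extremal has a definite sign
  have huniv : (univ : Finset (Fin l)).Nonempty := ⟨⟨0, hl0⟩, mem_univ _⟩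
  have hneg : ∃ k, u k < 0 := by
    obtain ⟨k₀, -, hk₀⟩ := Finset.exists_min_image univ u huniv
    refine ⟨k₀, ?_⟩
    obtain ⟨j, hj⟩ := exists_ne k₀
    have hSneg : ∑ j ∈ univ.erase k₀, (m j : ℝ) / (u k₀ - u j) < 0 := by
      have h0 : ∑ j ∈ univ.erase k₀, (0:ℝ) = 0 := by simp
      calc ∑ j ∈ univ.erase k₀, (m j : ℝ) / (u k₀ - u j)
          < ∑ j ∈ univ.erase k₀, (0:ℝ) := by
            apply Finset.sum_lt_sum_of_nonempty ⟨j, Finset.mem_erase.mpr ⟨hj, mem_univ _⟩⟩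
            intro i hi
            have hine : i ≠ k₀ := (Finset.mem_erase.mp hi).1
            have : u k₀ < u i :=
              lt_of_le_of_ne (hk₀ i (mem_univ _)) (fun h => hine (hu h.symm))
            exact div_neg_of_pos_of_neg (hmR i) (by linarith)
        _ = 0 := h0
    by_contra hpos
    push_neg at hpos
    have h2 : 2 * u k₀ * ∑ j ∈ univ.erase k₀, (m j : ℝ) / (u k₀ - u j) ≤ 0 :=
      mul_nonpos_of_nonneg_of_nonpos (by linarith) hSneg.le
    linarith [hmnR k₀, hstar k₀]
  have hpos : ∃ k, 0 < u k := by
    obtain ⟨k₁, -, hk₁⟩ := Finset.exists_max_image univ u huniv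
    refine ⟨k₁, ?_⟩
    obtain ⟨j, hj⟩ := exists_ne k₁
    have hSpos : 0 < ∑ j ∈ univ.erase k₁, (m j : ℝ) / (u k₁ - u j) := by
      have h0 : ∑ j ∈ univ.erase k₁, (0:ℝ) = 0 := by simp
      calc (0:ℝ) = ∑ j ∈ univ.erase k₁, (0:ℝ) := h0.symm
        _ < ∑ j ∈ univ.erase k₁, (m j : ℝ) / (u k₁ - u j) := by
            apply Finset.sum_lt_sum_of_nonempty ⟨j, Finset.mem_erase.mpr ⟨hj, mem_univ _⟩⟩
            intro i hi
            have hine : i ≠ k₁ := (Finset.mem_erase.mp hi).1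
            have : u i < u k₁ :=
              lt_of_le_of_ne (hk₁ i (mem_univ _)) (fun h => hine (hu h))
            exact div_pos (hmR i) (by linarith)
    by_contra hneg'
    push_neg at hneg'
    have h2 : 2 * u k₁ * ∑ j ∈ univ.erase k₁, (m j : ℝ) / (u k₁ - u j) ≤ 0 :=
      mul_nonpos_of_nonpos_of_nonneg (by linarith) hSpos.le
    linarith [hmnR k₁, hstar k₁]
  -- p : largest negative, q : smallest positive
  have hNf : (univ.filter (fun k => u k < 0)).Nonempty := by
    obtain ⟨k, hk⟩ := hneg; exact ⟨k, by simp [hk]⟩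
  have hPf : (univ.filter (fun k => 0 < u k)).Nonempty := by
    obtain ⟨k, hk⟩ := hpos; exact ⟨k, by simp [hk]⟩
  obtain ⟨p, hpmem, hpmax⟩ := Finset.exists_max_image _ u hNf
  obtain ⟨q, hqmem, hqmin⟩ := Finset.exists_min_image _ u hPf
  have hup : u p < 0 := (Finset.mem_filter.mp hpmem).2
  have huq : 0 < u q := (Finset.mem_filter.mp hqmem).2
  have hpq : p ≠ q := fun h => by rw [h] at hup; linarith
  -- trichotomy for other indices
  have htri : ∀ j : Fin l, j ≠ p → j ≠ q → u j < u p ∨ u q < u j := by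
    intro j hjp hjq
    rcases lt_or_gt_of_ne (hu0 j) with h | h
    · left
      exact lt_of_le_of_ne (hpmax j (by simp [h])) (fun he => hjp (hu he))
    · right
      exact lt_of_le_of_ne (hqmin j (by simp [h])) (fun he => hjq (hu he.symm))
  -- split the star equations at p and q
  have hqmem' : q ∈ univ.erase p := Finset.mem_erase.mpr ⟨hpq.symm, mem_univ _⟩
  have hpmem' : p ∈ univ.erase q := Finset.mem_erase.mpr ⟨hpq, mem_univ _⟩
  have hSp := hstar p
  have hSq := hstar q
  rw [← Finset.insert_erase hqmem', Finset.sum_insert (Finset.notMem_erase _ _)] at hSp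
  rw [← Finset.insert_erase hpmem', Finset.sum_insert (Finset.notMem_erase _ _),
      Finset.erase_right_comm] at hSq
  set E := (univ.erase p).erase q with hEdef
  -- the cross-term comparison
  have hT : (∑ j ∈ E, (m j : ℝ) / (u q - u j)) - ∑ j ∈ E, (m j : ℝ) / (u p - u j) ≤ 0 := by
    rw [← Finset.sum_sub_distrib]
    apply Finset.sum_nonpos
    intro j hj
    have hjq : j ≠ q := (Finset.mem_erase.mp hj).1
    have hjp : j ≠ p := (Finset.mem_erase.mp (Finset.mem_of_mem_erase hj)).1
    have h1 : u p - u j ≠ 0 := sub_ne_zero.mpr (fun h => hjp (hu h).symm)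
    have h2 : u q - u j ≠ 0 := sub_ne_zero.mpr (fun h => hjq (hu h).symm)
    have heq : (m j : ℝ) / (u q - u j) - (m j : ℝ) / (u p - u j)
        = (m j : ℝ) * (u p - u q) / ((u q - u j) * (u p - u j)) := by
      field_simp
      ring
    rw [heq]
    apply div_nonpos_of_nonpos_of_nonneg
    · exact mul_nonpos_of_nonneg_of_nonpos (hmR j).le (by linarith)
    · rcases htri j hjp hjq with h | h
      · exact (mul_pos (by linarith) (by linarith)).le
      · exact (mul_pos_of_neg_of_neg (by linarith) (by linarith)).le
  set Sp := ∑ j ∈ E, (m j : ℝ) / (u p - u j) with hSpdef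
  set Sq := ∑ j ∈ E, (m j : ℝ) / (u q - u j) with hSqdef
  -- clear denominators in the two star equations
  have hnepq : u p - u q ≠ 0 := sub_ne_zero.mpr (hu.ne hpq)
  have hneqp : u q - u p ≠ 0 := sub_ne_zero.mpr (hu.ne hpq.symm)
  have hA' : ((n : ℝ) - m p) * (u p - u q) = 2 * u p * (m q : ℝ) + 2 * u p * Sp * (u p - u q) := by
    field_simp at hSp
    linear_combination hSp
  have hB' : ((n : ℝ) - m q) * (u q - u p) = 2 * u q * (m p : ℝ) + 2 * u q * Sq * (u q - u p) := by
    field_simp at hSq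
    linear_combination hSq
  -- a third index exists
  have hthird : ∃ r : Fin l, r ≠ p ∧ r ≠ q := by
    by_contra h
    push_neg at h
    have hsub : (univ : Finset (Fin l)) ⊆ {p, q} := by
      intro x _
      rcases eq_or_ne x p with h1 | h1
      · simp [h1]
      · simp [h x h1]
    have hcard := Finset.card_le_card hsub
    have h2 : ({p, q} : Finset (Fin l)).card ≤ 2 :=
      (Finset.card_insert_le _ _).trans (by simp)
    rw [Finset.card_univ, Fintype.card_fin] at hcard
    omega
  obtain ⟨r, hrp, hrq⟩ := hthird
  have hmpq : m p + m q + m r ≤ n := by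
    have h3 : ∑ k ∈ ({p, q, r} : Finset (Fin l)), m k = m p + m q + m r := by
      rw [Finset.sum_insert (by simp [hpq, hrp.symm]),
        Finset.sum_insert (by simp [hrq.symm]), Finset.sum_singleton]
      ring
    calc m p + m q + m r = ∑ k ∈ ({p, q, r} : Finset (Fin l)), m k := h3.symm
      _ ≤ ∑ k, m k := Finset.sum_le_sum_of_subset (subset_univ _)
      _ = n := hsum
  have hmpqn : (m p : ℝ) + m q ≤ (n : ℝ) - 1 := by
    have h4 : m p + m q + 1 ≤ n := by have := hm r; omega
    have h5 : ((m p + m q + 1 : ℕ) : ℝ) ≤ n := Nat.cast_le.mpr h4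
    push_cast at h5
    linarith
  -- existence of a large multiplicity
  have hex : ∃ s : Fin l, (n : ℝ) / 2 < m s := by
    by_contra hno
    push_neg at hno
    have hα : (n : ℝ) ≤ 2 * ((n : ℝ) - m p) := by have := hno p; linarith
    have hβ : (n : ℝ) ≤ 2 * ((n : ℝ) - m q) := by have := hno q; linarith
    have hW : (0:ℝ) < 2 * u p * u q * (u p - u q) := by
      have h9 := mul_pos (mul_pos (neg_pos.mpr hup) huq) (sub_pos.mpr (lt_trans hup huq))
      linarith [h9]
    have hCmul : 2 * u p * u q * (u p - u q) * Sq ≤ 2 * u p * u q * (u p - u q) * Sp :=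
      mul_le_mul_of_nonneg_left (by linarith) hW.le
    have h1 : u q * (((n : ℝ) - m p) * (u p - u q))
        = u q * (2 * u p * (m q : ℝ) + 2 * u p * Sp * (u p - u q)) := by rw [hA']
    have h2 : u p * (((n : ℝ) - m q) * (u q - u p))
        = u p * (2 * u q * (m p : ℝ) + 2 * u q * Sq * (u q - u p)) := by rw [hB']
    have hx1 : (0:ℝ) ≤ (2 * ((n:ℝ) - m q) - n) * (u p) ^ 2 :=
      mul_nonneg (by linarith) (sq_nonneg _)
    have hx2 : (0:ℝ) ≤ (2 * ((n:ℝ) - m p) - n) * (u q) ^ 2 :=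
      mul_nonneg (by linarith) (sq_nonneg _)
    have hx3 : (0:ℝ) ≤ (n:ℝ) * (u p + u q) ^ 2 :=
      mul_nonneg (Nat.cast_nonneg _) (sq_nonneg _)
    have hx5 : (0:ℝ) < (-(u p)) * u q := mul_pos (by linarith) huq
    have hx4 : (0:ℝ) ≤ ((-(u p)) * u q) * (((n:ℝ) - m p) + ((n:ℝ) - m q) - n - 1) :=
      mul_nonneg hx5.le (by linarith)
    linarith [hCmul, h1, h2, hx1, hx2, hx3, hx4, hx5]
  -- uniqueness
  obtain ⟨s, hs⟩ := hex
  refine ⟨s, hs, ?_⟩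
  intro y hy
  by_contra hne
  have h6 : m y + m s ≤ n := by
    have h7 : ∑ k ∈ ({y, s} : Finset (Fin l)), m k = m y + m s := by
      rw [Finset.sum_insert (by simp [hne]), Finset.sum_singleton]
    calc m y + m s = ∑ k ∈ ({y, s} : Finset (Fin l)), m k := h7.symm
      _ ≤ ∑ k, m k := Finset.sum_le_sum_of_subset (subset_univ _)
      _ = n := hsum
  have h8 : ((m y : ℝ)) + m s ≤ n := by exact_mod_cast h6
  linarith
end

section
/- For every integer n ≥ 4, the system (★) has no solution with l = 4 and multiplicities m_1 = m_2 = m_3 = 1 and m_4 = n − 3; that is, there do not exist pairwise distinct real numbers u_1, u_2, u_3, u_4 such that n − m_k = 2·u_k·Σ_{j≠k} m_j/(u_k − u_j) holds for every k with these multiplicities. (Hence the Ricci tensor of an n-dimensional locally conformal flat manifold with constant Ricci eigenvalues cannot have four distinct eigenvalues three of which are simple.) -/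
/-- Auxiliary: two distinct reals with prescribed sum and product constraints
cannot exist when `4 ≤ N` and `d ≠ 0`. -/
lemma no_four_aux (N b c d : ℝ) (hN : 4 ≤ N) (hd : d ≠ 0) (hbc : b ≠ c)
    (hsum : (N - 1) * (b + c) = (8 - 2 * N) * d) (hprod : b * c = d ^ 2) :
    False := by
  have hd2 : 0 < d ^ 2 := by positivity
  have key : (N - 1) ^ 2 * (b - c) ^ 2 = 4 * d ^ 2 * (15 - 6 * N) := by
    linear_combination ((N - 1) * (b + c) + (8 - 2 * N) * d) * hsum - 4 * (N - 1) ^ 2 * hprod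
  nlinarith [sq_nonneg ((N - 1) * (b - c)), key,
    mul_pos hd2 (show (0:ℝ) < 6 * N - 15 by linarith)]

/-- For every integer `n ≥ 4`, the system (★) has no solution with `l = 4`
and multiplicities `m_1 = m_2 = m_3 = 1`, `m_4 = n - 3`: there are no pairwise
distinct reals `u_1, u_2, u_3, u_4` with
`n - m_k = 2 u_k Σ_{j≠k} m_j/(u_k - u_j)` for every `k`. Hence the Ricci
tensor of an `n`-dimensional locally conformal flat manifold with constant
Ricci eigenvalues cannot have four distinct eigenvalues, three simple. -/
theorem no_four_eigenvalues_three_simple (n : ℕ) (hn : 4 ≤ n) :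
    ¬ ∃ u1 u2 u3 u4 : ℝ,
      u1 ≠ u2 ∧ u1 ≠ u3 ∧ u1 ≠ u4 ∧ u2 ≠ u3 ∧ u2 ≠ u4 ∧ u3 ≠ u4 ∧
      (n : ℝ) - 1 = 2 * u1 *
        (1 / (u1 - u2) + 1 / (u1 - u3) + ((n : ℝ) - 3) / (u1 - u4)) ∧
      (n : ℝ) - 1 = 2 * u2 *
        (1 / (u2 - u1) + 1 / (u2 - u3) + ((n : ℝ) - 3) / (u2 - u4)) ∧
      (n : ℝ) - 1 = 2 * u3 *
        (1 / (u3 - u1) + 1 / (u3 - u2) + ((n : ℝ) - 3) / (u3 - u4)) ∧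
      (n : ℝ) - ((n : ℝ) - 3) = 2 * u4 *
        (1 / (u4 - u1) + 1 / (u4 - u2) + 1 / (u4 - u3)) := by
  rintro ⟨a, b, c, d, hab, hac, had, hbc, hbd, hcd, E1, E2, E3, E4⟩
  set N : ℝ := (n : ℝ) with hNdef
  have hN : (4 : ℝ) ≤ N := by rw [hNdef]; exact_mod_cast hn
  have hab' : a - b ≠ 0 := sub_ne_zero.mpr hab
  have hac' : a - c ≠ 0 := sub_ne_zero.mpr hac
  have had' : a - d ≠ 0 := sub_ne_zero.mpr had
  have hba' : b - a ≠ 0 := sub_ne_zero.mpr hab.symm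
  have hbc' : b - c ≠ 0 := sub_ne_zero.mpr hbc
  have hbd' : b - d ≠ 0 := sub_ne_zero.mpr hbd
  have hca' : c - a ≠ 0 := sub_ne_zero.mpr hac.symm
  have hcb' : c - b ≠ 0 := sub_ne_zero.mpr hbc.symm
  have hcd' : c - d ≠ 0 := sub_ne_zero.mpr hcd
  have hda' : d - a ≠ 0 := sub_ne_zero.mpr had.symm
  have hdb' : d - b ≠ 0 := sub_ne_zero.mpr hbd.symm
  have hdc' : d - c ≠ 0 := sub_ne_zero.mpr hcd.symm
  -- d ≠ 0, from the fourth equation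
  have hd0 : d ≠ 0 := by
    intro h
    rw [h] at E4
    simp at E4
  -- cleared forms of the first three equations
  have P1 : (N - 1) * ((a - b) * ((a - c) * (a - d))) =
      2 * a * ((a - c) * (a - d) + (a - b) * (a - d) + (N - 3) * ((a - b) * (a - c))) := by
    field_simp at E1
    linear_combination E1
  have P2 : (N - 1) * ((b - a) * ((b - c) * (b - d))) =
      2 * b * ((b - c) * (b - d) + (b - a) * (b - d) + (N - 3) * ((b - a) * (b - c))) := by
    field_simp at E2
    linear_combination E2
  have P3 : (N - 1) * ((c - a) * ((c - b) * (c - d))) =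
      2 * c * ((c - b) * (c - d) + (c - a) * (c - d) + (N - 3) * ((c - a) * (c - b))) := by
    field_simp at E3
    linear_combination E3
  -- elementary symmetric functions
  set s1 : ℝ := a + b + c with hs1def
  set s2 : ℝ := a * b + b * c + c * a with hs2def
  set s3 : ℝ := a * b * c with hs3def
  set C2 : ℝ := (1 - N) * s1 + (9 - 3 * N) * d with hC2def
  set C1 : ℝ := (2 * N - 4) * (s2 + s1 * d) with hC1def
  set C0 : ℝ := -(N - 1) * s2 * d - 3 * (N - 3) * s3 with hC0def
  have hGa : C2 * a ^ 2 + C1 * a + C0 = 0 := by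
    rw [hC2def, hC1def, hC0def, hs1def, hs2def, hs3def]
    linear_combination P1
  have hGb : C2 * b ^ 2 + C1 * b + C0 = 0 := by
    rw [hC2def, hC1def, hC0def, hs1def, hs2def, hs3def]
    linear_combination P2
  have hGc : C2 * c ^ 2 + C1 * c + C0 = 0 := by
    rw [hC2def, hC1def, hC0def, hs1def, hs2def, hs3def]
    linear_combination P3
  -- Vandermonde: the quadratic with coefficients C2, C1, C0 vanishes at three
  -- distinct points, so all coefficients vanish.
  have hlin1 : C2 * (a + b) + C1 = 0 := by
    have h : (a - b) * (C2 * (a + b) + C1) = 0 := by linear_combination hGa - hGb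
    exact (mul_eq_zero.mp h).resolve_left hab'
  have hlin2 : C2 * (a + c) + C1 = 0 := by
    have h : (a - c) * (C2 * (a + c) + C1) = 0 := by linear_combination hGa - hGc
    exact (mul_eq_zero.mp h).resolve_left hac'
  have hc2 : C2 = 0 := by
    have h : (b - c) * C2 = 0 := by linear_combination hlin1 - hlin2
    exact (mul_eq_zero.mp h).resolve_left hbc'
  have hc1 : C1 = 0 := by linear_combination hlin1 - (a + b) * hc2
  have hc0 : C0 = 0 := by linear_combination hGa - a ^ 2 * hc2 - a * hc1
  -- resulting symmetric-function relations
  have hs1 : (N - 1) * s1 + (3 * N - 9) * d = 0 := by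
    rw [hC2def] at hc2; linear_combination -hc2
  have hs2 : s2 + s1 * d = 0 := by
    rw [hC1def] at hc1
    have h2 : (2 * N - 4) ≠ 0 := by intro h; linarith [hN]
    have := mul_eq_zero.mp hc1
    rcases this with h | h
    · exact absurd h h2
    · exact h
  have hs3 : s3 = -d ^ 3 := by
    rw [hC0def] at hc0
    have key : 3 * (N - 3) * (s3 + d ^ 3) = 0 := by
      linear_combination -hc0 - (N - 1) * d * hs2 + d ^ 2 * hs1
    have h3 : (3 * (N - 3)) ≠ 0 := by intro h; linarith [hN]
    have := mul_eq_zero.mp key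
    rcases this with h | h
    · exact absurd h h3
    · linarith [h]
  -- hence -d is one of a, b, c
  have hprod : (a + d) * ((b + d) * (c + d)) = 0 := by
    rw [hs1def] at hs1
    rw [hs2def, hs1def] at hs2
    rw [hs3def] at hs3
    linear_combination hs3 + d * hs2
  rcases mul_eq_zero.mp hprod with h | h'
  · -- a = -d
    have ha : a = -d := by linarith [h]
    rw [hs2def, hs1def, ha] at hs2
    rw [hs1def, ha] at hs1
    rw [hs3def, ha] at hs3
    have hbcprod : b * c = d ^ 2 := by
      have h2 : d * (b * c - d ^ 2) = 0 := by linear_combination -hs3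
      rcases mul_eq_zero.mp h2 with h | h
      · exact absurd h hd0
      · linarith [h]
    have hsum : (N - 1) * (b + c) = (8 - 2 * N) * d := by linear_combination hs1
    exact no_four_aux N b c d hN hd0 hbc hsum hbcprod
  · rcases mul_eq_zero.mp h' with h | h
    · -- b = -d
      have hb : b = -d := by linarith [h]
      rw [hs1def, hb] at hs1
      rw [hs3def, hb] at hs3
      have hacprod : a * c = d ^ 2 := by
        have h2 : d * (a * c - d ^ 2) = 0 := by linear_combination -hs3
        rcases mul_eq_zero.mp h2 with h | h
        · exact absurd h hd0
        · linarith [h]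
      have hsum : (N - 1) * (a + c) = (8 - 2 * N) * d := by linear_combination hs1
      exact no_four_aux N a c d hN hd0 hac hsum hacprod
    · -- c = -d
      have hc : c = -d := by linarith [h]
      rw [hs1def, hc] at hs1
      rw [hs3def, hc] at hs3
      have habprod : a * b = d ^ 2 := by
        have h2 : d * (a * b - d ^ 2) = 0 := by linear_combination -hs3
        rcases mul_eq_zero.mp h2 with h | h
        · exact absurd h hd0
        · linarith [h]
      have hsum : (N - 1) * (a + b) = (8 - 2 * N) * d := by linear_combination hs1
      exact no_four_aux N a b d hN hd0 hab hsum habprod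
end

section
/- If 4 ≤ n ≤ 8 and the system (★) holds, then l ≤ 2. (This is the algebraic heart of the classification: a locally conformal flat Riemannian manifold of dimension 4 ≤ n ≤ 8 with constant Ricci eigenvalues has at most two distinct Ricci eigenvalues.) -/
open Finset

/-!
Since `n - m_k = Σ_{j≠k} m_j`, the system (★) says `Σ_{j≠k} m_j (u_k + u_j)/(u_k - u_j) = 0`
for every `k`. Multiplying by `m_k u_k²`, summing over `k` and symmetrizing in `(k, j)` gives
`Σ_{k≠j} m_k m_j (u_k + u_j)² = 0`, so `u_j = -u_k` whenever `j ≠ k`; three pairwise distinct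
reals cannot be pairwise opposite.
-/

section

variable {ι K : Type*} [Fintype ι] [DecidableEq ι]

theorem sum_sum_erase_comm {β : Type*} [AddCommMonoid β] (g : ι → ι → β) :
    ∑ k, ∑ j ∈ univ.erase k, g k j = ∑ k, ∑ j ∈ univ.erase k, g j k :=
  sum_comm' fun k j => by simp [ne_comm]

theorem sum_sum_erase_add_eq_zero_of_sum_erase_eq_zero {R : Type*}
    [NonUnitalNonAssocSemiring R] {a : ι → ι → R} (ha : ∀ k, ∑ j ∈ univ.erase k, a k j = 0)
    (x : ι → R) :
    ∑ k, ∑ j ∈ univ.erase k, (a k j * x k + a j k * x j) = 0 := by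
  have hrow : ∑ k, ∑ j ∈ univ.erase k, a k j * x k = 0 := by
    simp [← sum_mul, ha]
  simp only [sum_add_distrib, ← sum_sum_erase_comm (fun k j => a k j * x k), hrow, add_zero]

variable [Field K] {m u : ι → K}

theorem sum_erase_mul_add_div_sub_eq_zero (hu : Function.Injective u)
    (hstar : ∀ k, ∑ j ∈ univ.erase k, m j = 2 * u k * ∑ j ∈ univ.erase k, m j / (u k - u j))
    (k : ι) : ∑ j ∈ univ.erase k, m j * ((u k + u j) / (u k - u j)) = 0 := by
  have hterm : ∀ j ∈ univ.erase k,
      m j * ((u k + u j) / (u k - u j)) = 2 * u k * (m j / (u k - u j)) - m j := by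
    intro j hj
    have hkj : u k - u j ≠ 0 := sub_ne_zero.mpr (hu.ne (ne_of_mem_erase hj).symm)
    field_simp
    ring
  rw [sum_congr rfl hterm, sum_sub_distrib, ← mul_sum, ← hstar k, sub_self]

theorem sum_sum_erase_mul_mul_add_sq_eq_zero (hu : Function.Injective u)
    (hstar : ∀ k, ∑ j ∈ univ.erase k, m j = 2 * u k * ∑ j ∈ univ.erase k, m j / (u k - u j)) :
    ∑ k, ∑ j ∈ univ.erase k, m k * m j * (u k + u j) ^ 2 = 0 := by
  have hrow (k : ι) : ∑ j ∈ univ.erase k, m k * (m j * ((u k + u j) / (u k - u j))) = 0 := by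
    rw [← mul_sum, sum_erase_mul_add_div_sub_eq_zero hu hstar k, mul_zero]
  rw [← sum_sum_erase_add_eq_zero_of_sum_erase_eq_zero hrow (fun k => u k ^ 2)]
  refine sum_congr rfl fun k _ => sum_congr rfl fun j hj => ?_
  have hkj : u k - u j ≠ 0 := sub_ne_zero.mpr (hu.ne (ne_of_mem_erase hj).symm)
  have hjk : u j - u k ≠ 0 := sub_ne_zero.mpr (hu.ne (ne_of_mem_erase hj))
  field_simp
  ring

end

theorem add_eq_zero_of_sum_sum_erase_mul_mul_add_sq_eq_zero {ι K : Type*} [Fintype ι]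
    [DecidableEq ι] [Field K] [LinearOrder K] [IsStrictOrderedRing K] {m u : ι → K}
    (hm : ∀ k, 0 < m k) (h : ∑ k, ∑ j ∈ univ.erase k, m k * m j * (u k + u j) ^ 2 = 0)
    {k j : ι} (hkj : j ≠ k) : u k + u j = 0 := by
  have hnonneg (k j : ι) : 0 ≤ m k * m j * (u k + u j) ^ 2 :=
    mul_nonneg (mul_pos (hm k) (hm j)).le (sq_nonneg _)
  have hrow := (sum_eq_zero_iff_of_nonneg fun k _ =>
    sum_nonneg fun j _ => hnonneg k j).mp h k (mem_univ k)
  have hterm := (sum_eq_zero_iff_of_nonneg fun j _ => hnonneg k j).mp hrow j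
    (mem_erase.mpr ⟨hkj, mem_univ j⟩)
  simpa [(hm k).ne', (hm j).ne'] using hterm

theorem Fintype.card_le_two_of_add_eq_zero {ι G : Type*} [Fintype ι] [AddGroup G] {u : ι → G}
    (hu : Function.Injective u) (h : ∀ k j, j ≠ k → u k + u j = 0) : Fintype.card ι ≤ 2 := by
  by_contra! hcard
  obtain ⟨a, b, c, hab, hac, hbc⟩ := Fintype.two_lt_card_iff.mp hcard
  have hb : u b = -u a := eq_neg_of_add_eq_zero_right (h a b hab.symm)
  have hc : u c = -u a := eq_neg_of_add_eq_zero_right (h a c hac.symm)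
  exact hbc (hu (hb.trans hc.symm))

theorem star_system_dim_le_eight_general
    (n l : ℕ)
    (m : Fin l → ℕ) (hm : ∀ k, 0 < m k) (hsum : ∑ k, m k = n)
    (u : Fin l → ℝ) (hu : Function.Injective u)
    (hstar : ∀ k, (n : ℝ) - (m k : ℝ) =
      2 * u k * ∑ j ∈ univ.erase k, (m j : ℝ) / (u k - u j)) :
    l ≤ 2 := by
  have hstar' (k : Fin l) : ∑ j ∈ univ.erase k, (m j : ℝ) =
      2 * u k * ∑ j ∈ univ.erase k, (m j : ℝ) / (u k - u j) := by
    rw [← hstar k, sum_erase_eq_sub (mem_univ k), ← hsum, Nat.cast_sum]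
  have hsq := sum_sum_erase_mul_mul_add_sq_eq_zero hu hstar'
  have hopp (k j : Fin l) (hkj : j ≠ k) : u k + u j = 0 :=
    add_eq_zero_of_sum_sum_erase_mul_mul_add_sq_eq_zero (fun k => by exact_mod_cast hm k) hsq hkj
  simpa using Fintype.card_le_two_of_add_eq_zero hu hopp

/-- Algebraic heart of the classification: if `4 ≤ n ≤ 8` and the system (★)
`n - m_k = 2 u_k Σ_{j≠k} m_j/(u_k - u_j)` holds for pairwise distinct reals
`u_1, …, u_l` with positive multiplicities `m_k` summing to `n`, then `l ≤ 2`.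
Thus a locally conformal flat Riemannian manifold of dimension `4 ≤ n ≤ 8`
with constant Ricci eigenvalues has at most two distinct Ricci eigenvalues. -/
theorem star_system_dim_le_eight
    (n l : ℕ) (hn4 : 4 ≤ n) (hn8 : n ≤ 8) (hl : 0 < l)
    (m : Fin l → ℕ) (hm : ∀ k, 0 < m k) (hsum : ∑ k, m k = n)
    (u : Fin l → ℝ) (hu : Function.Injective u)
    (hstar : ∀ k, (n : ℝ) - (m k : ℝ) =
      2 * u k * ∑ j ∈ univ.erase k, (m j : ℝ) / (u k - u j)) :
    l ≤ 2 :=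
  star_system_dim_le_eight_general n l m hm hsum u hu hstar
end
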